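/- Let Λ ∈ ℒ_{d+c}. (1) The set {t ∈ ℝ : g_tΛ ∈ S} is contained in V_Λ(S) = {(1/(d+c))·ln(q_{k+1}(Λ)/r_k(Λ)) : k such that X_k(Λ), X_{k+1}(Λ) exist}, and the set {t ∈ ℝ : g_tΛ ∈ S'} is contained in V_Λ(S') = {(1/(d+c))·ln(q_k(Λ)/r_k(Λ)) : k such that X_k(Λ) exists}. (2) If Λ ∉ 𝒩 then both inclusions are equalities. -/

import Mathlib

open MeasureTheory Filter Topology

noncomputable section

/-- Horizontal component (first `d` coordinates) of `x ∈ ℝ^{d+c}`, in Euclidean `ℝ^d`;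
`|x|_+ = ‖hp d c x‖`. -/
def hp (d c : ℕ) (x : Fin (d + c) → ℝ) : EuclideanSpace ℝ (Fin d) :=
  WithLp.toLp 2 (fun i => x (Fin.castAdd c i))

/-- Vertical component (last `c` coordinates) of `x ∈ ℝ^{d+c}`, in Euclidean `ℝ^c`;
the height is `|x|_- = ‖vp d c x‖`. -/
def vp (d c : ℕ) (x : Fin (d + c) → ℝ) : EuclideanSpace ℝ (Fin c) :=
  WithLp.toLp 2 (fun j => x (Fin.natAdd d j))

/-- The lattice `M·ℤ^n ⊆ ℝ^n` spanned by the columns of `M`. -/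
def latSet {n : ℕ} (M : Matrix (Fin n) (Fin n) ℝ) : Set (Fin n → ℝ) :=
  Set.range fun v : Fin n → ℤ => M.mulVec fun i => (v i : ℝ)

/-- `X` is a minimal vector of `Λ ⊆ ℝ^{d+c}`: any nonzero `Y ∈ Λ` with `|Y|_+ ≤ |X|_+` and
`|Y|_- ≤ |X|_-` satisfies `|Y|_+ = |X|_+` and `|Y|_- = |X|_-`. -/
def IsMinVec (d c : ℕ) (Λ : Set (Fin (d + c) → ℝ)) (X : Fin (d + c) → ℝ) : Prop :=
  X ∈ Λ ∧ X ≠ 0 ∧ ∀ Y ∈ Λ, Y ≠ 0 → ‖hp d c Y‖ ≤ ‖hp d c X‖ → ‖vp d c Y‖ ≤ ‖vp d c X‖ →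
    ‖hp d c Y‖ = ‖hp d c X‖ ∧ ‖vp d c Y‖ = ‖vp d c X‖

/-- `X` and `Y` are (representatives of) consecutive minimal vectors of `Λ`, ordered by
height: no equivalence class of minimal vectors has height strictly between those of `X`
and `Y`. -/
def ConsecMin (d c : ℕ) (Λ : Set (Fin (d + c) → ℝ)) (X Y : Fin (d + c) → ℝ) : Prop :=
  IsMinVec d c Λ X ∧ IsMinVec d c Λ Y ∧ ‖vp d c X‖ < ‖vp d c Y‖ ∧
    ∀ Z, IsMinVec d c Λ Z → ‖vp d c X‖ < ‖vp d c Z‖ → ‖vp d c Y‖ ≤ ‖vp d c Z‖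

/-- The diagonal matrix `g_t = diag(e^{ct}·I_d, e^{-dt}·I_c)` of the flow. -/
def gtMat (d c : ℕ) (t : ℝ) : Matrix (Fin (d + c)) (Fin (d + c)) ℝ :=
  Matrix.diagonal
    (Fin.append (fun _ : Fin d => Real.exp (c * t)) (fun _ : Fin c => Real.exp (-(d * t))))

lemma gtMat_det (d c : ℕ) (t : ℝ) : (gtMat d c t).det = 1 := by
  rw [gtMat, Matrix.det_diagonal, Fin.prod_univ_add]
  simp only [Fin.append_left, Fin.append_right, Finset.prod_const, Finset.card_univ,
    Fintype.card_fin, ← Real.exp_nat_mul, ← Real.exp_add, Real.exp_eq_one_iff]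
  ring

/-- The max-norm `‖x‖_{ℝ^{d+c}} = max(|x|_+, |x|_-)`. -/
def fullNorm (d c : ℕ) (x : Fin (d + c) → ℝ) : ℝ := max ‖hp d c x‖ ‖vp d c x‖

/-- First minimum `λ₁(Λ)` of `Λ` for the max-norm. -/
def lambda1 (d c : ℕ) (Λ : Set (Fin (d + c) → ℝ)) : ℝ :=
  sInf (fullNorm d c '' {x | x ∈ Λ ∧ x ≠ 0})

/-- `v₀, v₁` witness membership of `Λ` in the transversal `S`: they are linearly independent,
`|v₁|_+` and `|v₀|_-` are `< |v₁|_- = |v₀|_+`, and the only nonzero points of `Λ` in the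
closed ball of radius `λ₁(Λ)` are `±v₀, ±v₁`. -/
def SWitness (d c : ℕ) (Λ : Set (Fin (d + c) → ℝ)) (v₀ v₁ : Fin (d + c) → ℝ) : Prop :=
  v₀ ∈ Λ ∧ v₁ ∈ Λ ∧ LinearIndependent ℝ ![v₀, v₁] ∧
    ‖hp d c v₁‖ < ‖vp d c v₁‖ ∧ ‖vp d c v₀‖ < ‖vp d c v₁‖ ∧ ‖vp d c v₁‖ = ‖hp d c v₀‖ ∧
    ∀ x ∈ Λ, x ≠ 0 → fullNorm d c x ≤ lambda1 d c Λ → x = v₀ ∨ x = -v₀ ∨ x = v₁ ∨ x = -v₁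

/-- The transversal `S` (as a predicate on lattices of `ℝ^{d+c}`). -/
def SPred (d c : ℕ) (Λ : Set (Fin (d + c) → ℝ)) : Prop := ∃ v₀ v₁, SWitness d c Λ v₀ v₁

/-- `w` witnesses membership of `Λ` in the transversal `S'`: the only nonzero points of `Λ`
in the closed ball of radius `λ₁(Λ)` are `±w`, and this ball equals the cylinder `C(w)`. -/
def S'Witness (d c : ℕ) (Λ : Set (Fin (d + c) → ℝ)) (w : Fin (d + c) → ℝ) : Prop :=
  w ∈ Λ ∧ w ≠ 0 ∧
    (∀ x ∈ Λ, x ≠ 0 → fullNorm d c x ≤ lambda1 d c Λ → x = w ∨ x = -w) ∧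
    {x : Fin (d + c) → ℝ | fullNorm d c x ≤ lambda1 d c Λ} =
      {x : Fin (d + c) → ℝ | ‖hp d c x‖ ≤ ‖hp d c w‖ ∧ ‖vp d c x‖ ≤ ‖vp d c w‖}

/-- The transversal `S'` (as a predicate on lattices of `ℝ^{d+c}`). -/
def S'Pred (d c : ℕ) (Λ : Set (Fin (d + c) → ℝ)) : Prop := ∃ w, S'Witness d c Λ w

/-- The exceptional set `𝒩`: lattices having two nonzero vectors `v₁ ≠ ±v₂` with equal
positive horizontal norms or equal positive heights, or a nonzero vector in the vertical
subspace `{0}×ℝ^c` or in the horizontal subspace `ℝ^d×{0}`. -/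
def NPred (d c : ℕ) (Λ : Set (Fin (d + c) → ℝ)) : Prop :=
  (∃ v₁ ∈ Λ, ∃ v₂ ∈ Λ, v₁ ≠ 0 ∧ v₂ ≠ 0 ∧ v₁ ≠ v₂ ∧ v₁ ≠ -v₂ ∧
    ((‖hp d c v₁‖ = ‖hp d c v₂‖ ∧ 0 < ‖hp d c v₁‖) ∨
     (‖vp d c v₁‖ = ‖vp d c v₂‖ ∧ 0 < ‖vp d c v₁‖))) ∨
  (∃ v ∈ Λ, v ≠ 0 ∧ (hp d c v = 0 ∨ vp d c v = 0))

section Aux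

variable {d c : ℕ}

lemma hp_apply (x : Fin (d + c) → ℝ) (i : Fin d) : hp d c x i = x (Fin.castAdd c i) := rfl
lemma vp_apply (x : Fin (d + c) → ℝ) (j : Fin c) : vp d c x j = x (Fin.natAdd d j) := rfl

lemma eq_zero_of_hp_vp {x : Fin (d + c) → ℝ} (h1 : hp d c x = 0) (h2 : vp d c x = 0) :
    x = 0 := by
  funext i
  refine Fin.addCases (fun j => ?_) (fun j => ?_) i
  · exact congrArg (fun u => u j) h1
  · exact congrArg (fun u => u j) h2

lemma hp_neg (x : Fin (d + c) → ℝ) : hp d c (-x) = -(hp d c x) := rfl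
lemma vp_neg (x : Fin (d + c) → ℝ) : vp d c (-x) = -(vp d c x) := rfl

lemma norm_hp_neg (x : Fin (d + c) → ℝ) : ‖hp d c (-x)‖ = ‖hp d c x‖ := by
  rw [hp_neg, norm_neg]
lemma norm_vp_neg (x : Fin (d + c) → ℝ) : ‖vp d c (-x)‖ = ‖vp d c x‖ := by
  rw [vp_neg, norm_neg]

lemma hp_smul (a : ℝ) (x : Fin (d + c) → ℝ) : hp d c (a • x) = a • hp d c x := rfl
lemma vp_smul (a : ℝ) (x : Fin (d + c) → ℝ) : vp d c (a • x) = a • vp d c x := rfl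

lemma fullNorm_nonneg (x : Fin (d + c) → ℝ) : 0 ≤ fullNorm d c x :=
  le_trans (norm_nonneg _) (le_max_left _ _)

lemma fullNorm_pos {x : Fin (d + c) → ℝ} (hx : x ≠ 0) : 0 < fullNorm d c x := by
  rcases (fullNorm_nonneg x).lt_or_eq with h | h
  · exact h
  · exfalso
    apply hx
    have h1 : ‖hp d c x‖ = 0 := le_antisymm (by rw [h]; exact le_max_left _ _) (norm_nonneg _)
    have h2 : ‖vp d c x‖ = 0 := le_antisymm (by rw [h]; exact le_max_right _ _) (norm_nonneg _)
    exact eq_zero_of_hp_vp (norm_eq_zero.mp h1) (norm_eq_zero.mp h2)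

lemma fullNorm_neg (x : Fin (d + c) → ℝ) : fullNorm d c (-x) = fullNorm d c x := by
  rw [fullNorm, fullNorm, norm_hp_neg, norm_vp_neg]

/-- coordinate bound for Euclidean norms -/
lemma abs_coord_le_norm {m : ℕ} (u : EuclideanSpace ℝ (Fin m)) (i : Fin m) : |u i| ≤ ‖u‖ := by
  have h := EuclideanSpace.norm_eq u
  rw [h]
  have : |u i| = Real.sqrt (‖u i‖ ^ 2) := by
    rw [Real.norm_eq_abs, Real.sqrt_sq (abs_nonneg _)]
  rw [this]
  apply Real.sqrt_le_sqrt
  exact Finset.single_le_sum (fun j _ => sq_nonneg ‖u j‖) (Finset.mem_univ i)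

lemma abs_le_fullNorm (x : Fin (d + c) → ℝ) (i : Fin (d + c)) : |x i| ≤ fullNorm d c x := by
  refine Fin.addCases (fun j => ?_) (fun j => ?_) i
  · exact le_trans (abs_coord_le_norm (hp d c x) j) (le_max_left _ _)
  · exact le_trans (abs_coord_le_norm (vp d c x) j) (le_max_right _ _)

end Aux
section Aux2

variable {d c : ℕ}

lemma gt_mulVec_apply (t : ℝ) (x : Fin (d + c) → ℝ) (i : Fin (d + c)) :
    (gtMat d c t).mulVec x i =
      Fin.append (fun _ : Fin d => Real.exp (c * t)) (fun _ : Fin c => Real.exp (-(d * t))) i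
        * x i := by
  rw [gtMat, Matrix.mulVec_diagonal]

lemma hp_gt (t : ℝ) (x : Fin (d + c) → ℝ) :
    hp d c ((gtMat d c t).mulVec x) = Real.exp (c * t) • hp d c x := by
  ext i
  show (gtMat d c t).mulVec x (Fin.castAdd c i) = Real.exp (c * t) * x (Fin.castAdd c i)
  rw [gt_mulVec_apply, Fin.append_left]

lemma vp_gt (t : ℝ) (x : Fin (d + c) → ℝ) :
    vp d c ((gtMat d c t).mulVec x) = Real.exp (-(d * t)) • vp d c x := by
  ext i
  show (gtMat d c t).mulVec x (Fin.natAdd d i) = Real.exp (-(d * t)) * x (Fin.natAdd d i)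
  rw [gt_mulVec_apply, Fin.append_right]

lemma norm_hp_gt (t : ℝ) (x : Fin (d + c) → ℝ) :
    ‖hp d c ((gtMat d c t).mulVec x)‖ = Real.exp (c * t) * ‖hp d c x‖ := by
  rw [hp_gt, norm_smul, Real.norm_eq_abs, abs_of_pos (Real.exp_pos _)]

lemma norm_vp_gt (t : ℝ) (x : Fin (d + c) → ℝ) :
    ‖vp d c ((gtMat d c t).mulVec x)‖ = Real.exp (-(d * t)) * ‖vp d c x‖ := by
  rw [vp_gt, norm_smul, Real.norm_eq_abs, abs_of_pos (Real.exp_pos _)]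

lemma gt_injective (t : ℝ) : Function.Injective ((gtMat d c t).mulVec) := by
  intro x y h
  funext i
  have hi := congrFun h i
  rw [gt_mulVec_apply, gt_mulVec_apply] at hi
  refine mul_left_cancel₀ ?_ hi
  refine Fin.addCases (fun j => ?_) (fun j => ?_) i
  · rw [Fin.append_left]; exact Real.exp_ne_zero _
  · rw [Fin.append_right]; exact Real.exp_ne_zero _

lemma latSet_mul (g M : Matrix (Fin (d + c)) (Fin (d + c)) ℝ) :
    latSet (g * M) = g.mulVec '' latSet M := by
  unfold latSet
  rw [← Set.range_comp]
  apply congrArg Set.range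
  funext v
  exact (Matrix.mulVec_mulVec _ g M).symm

lemma gt_mulVec_ne_zero {t : ℝ} {x : Fin (d + c) → ℝ} (hx : x ≠ 0) :
    (gtMat d c t).mulVec x ≠ 0 := by
  intro h
  exact hx (gt_injective t (by rw [h, Matrix.mulVec_zero]))

lemma gt_neg (t : ℝ) (x : Fin (d + c) → ℝ) :
    (gtMat d c t).mulVec (-x) = -((gtMat d c t).mulVec x) := Matrix.mulVec_neg _ _

end Aux2
section Aux3

variable {d c : ℕ}

lemma finite_small (M : Matrix (Fin (d + c)) (Fin (d + c)) ℝ) (hM : IsUnit M.det) (R : ℝ) :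
    {x | x ∈ latSet M ∧ fullNorm d c x ≤ R}.Finite := by
  classical
  set A := M⁻¹ with hA
  set R' := max R 0 with hR'
  set N : Fin (d + c) → ℤ := fun i => ⌈∑ j, |A i j| * R'⌉ with hN
  have hbox : Set.Finite {v : Fin (d + c) → ℤ | ∀ i, v i ∈ Set.Icc (-N i) (N i)} := by
    have := Set.Finite.pi (fun i : Fin (d + c) => Set.finite_Icc (-N i) (N i))
    refine this.subset ?_
    intro v hv
    simp only [Set.mem_pi, Set.mem_univ, forall_true_left]
    exact fun i => hv i
  refine (hbox.image (fun v : Fin (d + c) → ℤ => M.mulVec (fun i => (v i : ℝ)))).subset ?_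
  rintro x ⟨⟨v, rfl⟩, hx⟩
  set w : Fin (d + c) → ℝ := fun i => (v i : ℝ) with hw
  have hrec : A.mulVec (M.mulVec w) = w := by
    rw [Matrix.mulVec_mulVec, hA, Matrix.nonsing_inv_mul M hM, Matrix.one_mulVec]
  refine ⟨v, ?_, rfl⟩
  intro i
  have hvi : (v i : ℝ) = ∑ j, A i j * M.mulVec w j := by
    conv_lhs => rw [show (v i : ℝ) = w i from rfl, ← hrec]
    simp [Matrix.mulVec, dotProduct]
  have habs : |(v i : ℝ)| ≤ ∑ j, |A i j| * R' := by
    rw [hvi]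
    refine le_trans (Finset.abs_sum_le_sum_abs _ _) ?_
    refine Finset.sum_le_sum (fun j _ => ?_)
    rw [abs_mul]
    refine mul_le_mul_of_nonneg_left ?_ (abs_nonneg _)
    exact le_trans (abs_le_fullNorm _ j) (le_trans hx (le_max_left _ _))
  have hle : |v i| ≤ N i := by
    have h1 : ((|v i| : ℤ) : ℝ) ≤ ((N i : ℤ) : ℝ) := by
      rw [Int.cast_abs]
      exact le_trans habs (Int.le_ceil _)
    exact_mod_cast h1
  rw [Set.mem_Icc]
  exact ⟨neg_le_of_abs_le hle, le_of_abs_le hle⟩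

lemma mulVec_inj (M : Matrix (Fin (d + c)) (Fin (d + c)) ℝ) (hM : IsUnit M.det) :
    Function.Injective M.mulVec :=
  Matrix.mulVec_injective_iff_isUnit.2 ((Matrix.isUnit_iff_isUnit_det M).2 hM)

lemma exists_nonzero (hd : 0 < d) (M : Matrix (Fin (d + c)) (Fin (d + c)) ℝ)
    (hM : IsUnit M.det) : ∃ y ∈ latSet M, y ≠ 0 := by
  classical
  have hpos : 0 < d + c := Nat.lt_of_lt_of_le hd (Nat.le_add_right d c)
  set i₀ : Fin (d + c) := ⟨0, hpos⟩
  set w : Fin (d + c) → ℝ := fun i => (((Pi.single i₀ 1 : Fin (d + c) → ℤ)) i : ℝ) with hw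
  have hwmem : M.mulVec w ∈ latSet M := ⟨Pi.single i₀ 1, rfl⟩
  refine ⟨M.mulVec w, hwmem, ?_⟩
  intro h
  have h0 : w = 0 := by
    apply mulVec_inj M hM
    rw [h, Matrix.mulVec_zero]
  have := congrFun h0 i₀
  rw [hw] at this
  simp [Pi.single_eq_same] at this

lemma exists_min_fullNorm (hd : 0 < d) (M : Matrix (Fin (d + c)) (Fin (d + c)) ℝ)
    (hM : IsUnit M.det) :
    ∃ x₀ ∈ latSet M, x₀ ≠ 0 ∧ fullNorm d c x₀ = lambda1 d c (latSet M) ∧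
      ∀ y ∈ latSet M, y ≠ 0 → fullNorm d c x₀ ≤ fullNorm d c y := by
  obtain ⟨y₀, hy₀, hy₀0⟩ := exists_nonzero hd M hM
  set S := {x | x ∈ latSet M ∧ x ≠ 0 ∧ fullNorm d c x ≤ fullNorm d c y₀} with hS
  have hfin : S.Finite := by
    refine (finite_small M hM (fullNorm d c y₀)).subset ?_
    rintro x ⟨h1, _, h3⟩; exact ⟨h1, h3⟩
  have hne : S.Nonempty := ⟨y₀, hy₀, hy₀0, le_refl _⟩
  obtain ⟨x₀, hx₀S, hmin⟩ := Set.exists_min_image S (fullNorm d c) hfin hne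
  have hminall : ∀ y ∈ latSet M, y ≠ 0 → fullNorm d c x₀ ≤ fullNorm d c y := by
    intro y hy hy0
    by_cases hle : fullNorm d c y ≤ fullNorm d c y₀
    · exact hmin y ⟨hy, hy0, hle⟩
    · exact le_trans (hmin y₀ ⟨hy₀, hy₀0, le_refl _⟩) (le_of_not_ge hle)
  refine ⟨x₀, hx₀S.1, hx₀S.2.1, ?_, hminall⟩
  refine le_antisymm ?_ ?_
  · refine le_csInf ⟨fullNorm d c x₀, ⟨x₀, ⟨hx₀S.1, hx₀S.2.1⟩, rfl⟩⟩ ?_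
    rintro r ⟨y, ⟨hy, hy0⟩, rfl⟩
    exact hminall y hy hy0
  · refine csInf_le ⟨0, ?_⟩ ⟨x₀, ⟨hx₀S.1, hx₀S.2.1⟩, rfl⟩
    rintro r ⟨y, _, rfl⟩
    exact fullNorm_nonneg y

lemma exists_minvec_le (M : Matrix (Fin (d + c)) (Fin (d + c)) ℝ) (hM : IsUnit M.det)
    {Z : Fin (d + c) → ℝ} (hZ : Z ∈ latSet M) (hZ0 : Z ≠ 0) :
    ∃ W, IsMinVec d c (latSet M) W ∧ ‖hp d c W‖ ≤ ‖hp d c Z‖ ∧ ‖vp d c W‖ ≤ ‖vp d c Z‖ := by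
  set T := {W | W ∈ latSet M ∧ W ≠ 0 ∧ ‖hp d c W‖ ≤ ‖hp d c Z‖ ∧ ‖vp d c W‖ ≤ ‖vp d c Z‖}
    with hT
  have hfin : T.Finite := by
    refine (finite_small M hM (fullNorm d c Z)).subset ?_
    rintro x ⟨h1, _, h3, h4⟩
    exact ⟨h1, max_le (le_trans h3 (le_max_left _ _)) (le_trans h4 (le_max_right _ _))⟩
  have hne : T.Nonempty := ⟨Z, hZ, hZ0, le_refl _, le_refl _⟩
  obtain ⟨W, hWT, hmin⟩ :=
    Set.exists_min_image T (fun W => ‖hp d c W‖ + ‖vp d c W‖) hfin hne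
  obtain ⟨hWmem, hW0, hWh, hWv⟩ := hWT
  refine ⟨W, ⟨hWmem, hW0, ?_⟩, hWh, hWv⟩
  intro V hV hV0 hVh hVv
  have hVT : V ∈ T := ⟨hV, hV0, le_trans hVh hWh, le_trans hVv hWv⟩
  have := hmin V hVT
  constructor <;> linarith

end Aux3
section Aux4

variable {d c : ℕ}

lemma hp_zero : hp d c (0 : Fin (d + c) → ℝ) = 0 := rfl
lemma vp_zero : vp d c (0 : Fin (d + c) → ℝ) = 0 := rfl

lemma fullNorm_zero : fullNorm d c (0 : Fin (d + c) → ℝ) = 0 := by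
  rw [fullNorm, hp_zero, vp_zero]
  simp

lemma exists_hvec (hd : 0 < d) (a : ℝ) (ha : 0 ≤ a) :
    ∃ x : Fin (d + c) → ℝ, ‖hp d c x‖ = a ∧ ‖vp d c x‖ = 0 := by
  classical
  set j₀ : Fin d := ⟨0, hd⟩
  refine ⟨fun i => if i = Fin.castAdd c j₀ then a else 0, ?_, ?_⟩
  · have : hp d c (fun i => if i = Fin.castAdd c j₀ then a else 0) =
        EuclideanSpace.single j₀ a := by
      ext j
      show (if Fin.castAdd c j = Fin.castAdd c j₀ then a else 0) = _
      rw [EuclideanSpace.single_apply]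
      congr 1
      simp [Fin.ext_iff]
    rw [this, EuclideanSpace.norm_single, Real.norm_eq_abs, abs_of_nonneg ha]
  · have : vp d c (fun i => if i = Fin.castAdd c j₀ then a else 0) = 0 := by
      ext j
      show (if Fin.natAdd d j = Fin.castAdd c j₀ then a else 0) = 0
      rw [if_neg]
      intro h
      have h1 : d + (j : ℕ) = (j₀ : ℕ) := Fin.ext_iff.mp h
      have h2 := j₀.isLt
      omega
    rw [this, norm_zero]

lemma exists_vvec (hc : 0 < c) (a : ℝ) (ha : 0 ≤ a) :
    ∃ x : Fin (d + c) → ℝ, ‖hp d c x‖ = 0 ∧ ‖vp d c x‖ = a := by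
  classical
  set j₀ : Fin c := ⟨0, hc⟩
  refine ⟨fun i => if i = Fin.natAdd d j₀ then a else 0, ?_, ?_⟩
  · have : hp d c (fun i => if i = Fin.natAdd d j₀ then a else 0) = 0 := by
      ext j
      show (if Fin.castAdd c j = Fin.natAdd d j₀ then a else 0) = 0
      rw [if_neg]
      intro h
      have h1 : (j : ℕ) = d + (j₀ : ℕ) := Fin.ext_iff.mp h
      have h2 := j.isLt
      omega
    rw [this, norm_zero]
  · have : vp d c (fun i => if i = Fin.natAdd d j₀ then a else 0) =
        EuclideanSpace.single j₀ a := by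
      ext j
      show (if Fin.natAdd d j = Fin.natAdd d j₀ then a else 0) = _
      rw [EuclideanSpace.single_apply]
      congr 1
      simp [Fin.ext_iff]
    rw [this, EuclideanSpace.norm_single, Real.norm_eq_abs, abs_of_nonneg ha]

lemma dc_pos (hd : 0 < d) : (0 : ℝ) < (d : ℝ) + (c : ℝ) := by
  have h1 : (1 : ℝ) ≤ (d : ℝ) := by exact_mod_cast hd
  have h2 : (0 : ℝ) ≤ (c : ℝ) := Nat.cast_nonneg c
  linarith

lemma t_formula (hd : 0 < d) {t ph pv : ℝ} (hph : 0 < ph) (hpv : 0 < pv)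
    (key : Real.exp (c * t) * ph = Real.exp (-(d * t)) * pv) :
    t = (1 / ((d : ℝ) + c)) * Real.log (pv / ph) := by
  have e1 : Real.exp ((d : ℝ) * t) * Real.exp (-(d * t)) = 1 := by
    rw [← Real.exp_add]; simp
  have h2 : pv = Real.exp ((d : ℝ) * t) * Real.exp (c * t) * ph := by
    linear_combination (-Real.exp ((d : ℝ) * t)) * key - pv * e1
  have hdiv : pv / ph = Real.exp (((d : ℝ) + c) * t) := by
    rw [div_eq_iff (ne_of_gt hph)]
    have : ((d : ℝ) + c) * t = (d : ℝ) * t + c * t := by ring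
    rw [this, Real.exp_add]
    exact h2
  rw [hdiv, Real.log_exp]
  have hne : ((d : ℝ) + c) ≠ 0 := ne_of_gt (dc_pos hd)
  field_simp

end Aux4
section Aux5

variable {d c : ℕ}

lemma forward_S' (hd : 0 < d) (hc : 0 < c) (M : Matrix (Fin (d + c)) (Fin (d + c)) ℝ)
    {t : ℝ} (h : S'Pred d c (latSet (gtMat d c t * M))) :
    ∃ X, IsMinVec d c (latSet M) X ∧
      t = (1 / ((d : ℝ) + c)) * Real.log (‖vp d c X‖ / ‖hp d c X‖) := by
  obtain ⟨w, hwmem, hw0, hball, hcyl⟩ := h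
  rw [latSet_mul] at hwmem
  obtain ⟨W, hWmem, rfl⟩ := hwmem
  have hW0 : W ≠ 0 := by
    intro h0
    exact hw0 (by rw [h0, Matrix.mulVec_zero])
  set g := gtMat d c t with hg
  set lam := lambda1 d c (latSet (gtMat d c t * M)) with hlam
  set wh := ‖hp d c (g.mulVec W)‖ with hwhdef
  set wv := ‖vp d c (g.mulVec W)‖ with hwvdef
  -- wh ≤ lam
  have hwh_le : wh ≤ lam := by
    obtain ⟨x, hx1, hx2⟩ := exists_hvec (c := c) hd wh (norm_nonneg _)
    have hx : x ∈ {x : Fin (d + c) → ℝ | ‖hp d c x‖ ≤ wh ∧ ‖vp d c x‖ ≤ wv} :=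
      ⟨le_of_eq hx1, by rw [hx2]; exact norm_nonneg _⟩
    rw [← hcyl] at hx
    refine le_trans ?_ hx
    rw [fullNorm, hx1, hx2]
    exact le_max_left _ _
  have hlam0 : 0 ≤ lam := le_trans (norm_nonneg _) hwh_le
  have hle_wh : lam ≤ wh := by
    obtain ⟨y, hy1, hy2⟩ := exists_hvec (c := c) hd lam hlam0
    have hy : y ∈ {x : Fin (d + c) → ℝ | fullNorm d c x ≤ lam} := by
      show fullNorm d c y ≤ lam
      rw [fullNorm, hy1, hy2]
      exact max_le (le_refl _) hlam0
    rw [hcyl] at hy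
    rw [← hy1]
    exact hy.1
  have hwh : wh = lam := le_antisymm hwh_le hle_wh
  have hwv_le : wv ≤ lam := by
    obtain ⟨x, hx1, hx2⟩ := exists_vvec (d := d) hc wv (norm_nonneg _)
    have hx : x ∈ {x : Fin (d + c) → ℝ | ‖hp d c x‖ ≤ wh ∧ ‖vp d c x‖ ≤ wv} :=
      ⟨by rw [hx1]; exact norm_nonneg _, le_of_eq hx2⟩
    rw [← hcyl] at hx
    refine le_trans ?_ hx
    rw [fullNorm, hx1, hx2]
    exact le_max_right _ _
  have hle_wv : lam ≤ wv := by
    obtain ⟨y, hy1, hy2⟩ := exists_vvec (d := d) hc lam hlam0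
    have hy : y ∈ {x : Fin (d + c) → ℝ | fullNorm d c x ≤ lam} := by
      show fullNorm d c y ≤ lam
      rw [fullNorm, hy1, hy2]
      exact max_le hlam0 (le_refl _)
    rw [hcyl] at hy
    rw [← hy2]
    exact hy.2
  have hwv : wv = lam := le_antisymm hwv_le hle_wv
  have hlampos : 0 < lam := by
    rcases hlam0.lt_or_eq with h' | h'
    · exact h'
    · exfalso
      apply hw0
      apply eq_zero_of_hp_vp
      · exact norm_eq_zero.mp (by rw [← hwhdef, hwh, ← h'])
      · exact norm_eq_zero.mp (by rw [← hwvdef, hwv, ← h'])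
  -- key scaling identities
  have hwh' : Real.exp (c * t) * ‖hp d c W‖ = lam := by
    rw [← norm_hp_gt, ← hwhdef, hwh]
  have hwv' : Real.exp (-(d * t)) * ‖vp d c W‖ = lam := by
    rw [← norm_vp_gt, ← hwvdef, hwv]
  have hph : 0 < ‖hp d c W‖ := by
    nlinarith [Real.exp_pos ((c : ℝ) * t), norm_nonneg (hp d c W)]
  have hpv : 0 < ‖vp d c W‖ := by
    nlinarith [Real.exp_pos (-((d : ℝ) * t)), norm_nonneg (vp d c W)]
  have key : Real.exp (c * t) * ‖hp d c W‖ = Real.exp (-(d * t)) * ‖vp d c W‖ := by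
    rw [hwh', hwv']
  -- minimality
  refine ⟨W, ⟨hWmem, hW0, ?_⟩, t_formula hd hph hpv key⟩
  intro Z hZ hZ0 hZh hZv
  have hgZmem : g.mulVec Z ∈ latSet (gtMat d c t * M) := by
    rw [latSet_mul]
    exact ⟨Z, hZ, rfl⟩
  have hgZ0 : g.mulVec Z ≠ 0 := gt_mulVec_ne_zero hZ0
  have hmem2 : g.mulVec Z ∈ {x : Fin (d + c) → ℝ | ‖hp d c x‖ ≤ wh ∧ ‖vp d c x‖ ≤ wv} := by
    constructor
    · rw [hwhdef, norm_hp_gt, norm_hp_gt]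
      exact mul_le_mul_of_nonneg_left hZh (Real.exp_pos _).le
    · rw [hwvdef, norm_vp_gt, norm_vp_gt]
      exact mul_le_mul_of_nonneg_left hZv (Real.exp_pos _).le
  rw [← hcyl] at hmem2
  have heq : ‖hp d c (g.mulVec Z)‖ = ‖hp d c (g.mulVec W)‖ ∧
      ‖vp d c (g.mulVec Z)‖ = ‖vp d c (g.mulVec W)‖ := by
    rcases hball (g.mulVec Z) hgZmem hgZ0 hmem2 with h' | h'
    · rw [h']; exact ⟨rfl, rfl⟩
    · rw [h', norm_hp_neg, norm_vp_neg]; exact ⟨rfl, rfl⟩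
  constructor
  · have := heq.1
    rw [norm_hp_gt, norm_hp_gt] at this
    exact mul_left_cancel₀ (Real.exp_ne_zero _) this
  · have := heq.2
    rw [norm_vp_gt, norm_vp_gt] at this
    exact mul_left_cancel₀ (Real.exp_ne_zero _) this

end Aux5
section Aux6

variable {d c : ℕ}

lemma forward_S (hd : 0 < d) (hc : 0 < c) (M : Matrix (Fin (d + c)) (Fin (d + c)) ℝ)
    (hM : M.det = 1) {t : ℝ} (h : SPred d c (latSet (gtMat d c t * M))) :
    ∃ X Y, ConsecMin d c (latSet M) X Y ∧
      t = (1 / ((d : ℝ) + c)) * Real.log (‖vp d c Y‖ / ‖hp d c X‖) := by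
  obtain ⟨v₀, v₁, h0mem, h1mem, hli, h1lt, h0lt, heq, hball⟩ := h
  have hv₀0 : v₀ ≠ 0 := by
    have := hli.ne_zero 0
    simpa using this
  have hv₁0 : v₁ ≠ 0 := by
    have := hli.ne_zero 1
    simpa using this
  rw [latSet_mul] at h0mem h1mem
  obtain ⟨X, hX, rfl⟩ := h0mem
  obtain ⟨Y, hY, rfl⟩ := h1mem
  set g := gtMat d c t with hg
  have hX0 : X ≠ 0 := by
    intro h0; exact hv₀0 (by rw [h0, Matrix.mulVec_zero])
  have hY0 : Y ≠ 0 := by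
    intro h0; exact hv₁0 (by rw [h0, Matrix.mulVec_zero])
  set lam := ‖hp d c (g.mulVec X)‖ with hlamdef
  have hfn0 : fullNorm d c (g.mulVec X) = lam := by
    rw [fullNorm, max_eq_left]
    rw [← hlamdef, ← heq]
    exact le_of_lt h0lt
  have hfn1 : fullNorm d c (g.mulVec Y) = lam := by
    rw [fullNorm, max_eq_right (le_of_lt h1lt), heq]
  have hdet : IsUnit (gtMat d c t * M).det := by
    rw [Matrix.det_mul, gtMat_det d c t, hM, one_mul]
    exact isUnit_one
  obtain ⟨x₀, hx₀mem, hx₀0, hx₀lam, _⟩ := exists_min_fullNorm hd _ hdet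
  have hlam1 : lambda1 d c (latSet (gtMat d c t * M)) = lam := by
    rcases hball x₀ hx₀mem hx₀0 (le_of_eq hx₀lam) with h' | h' | h' | h'
    · rw [← hx₀lam, h']; exact hfn0
    · rw [← hx₀lam, h', fullNorm_neg]; exact hfn0
    · rw [← hx₀lam, h']; exact hfn1
    · rw [← hx₀lam, h', fullNorm_neg]; exact hfn1
  have hlampos : 0 < lam :=
    lt_of_lt_of_eq (fullNorm_pos hx₀0) (hx₀lam.trans hlam1)
  -- scaling identities
  have hhX : Real.exp (c * t) * ‖hp d c X‖ = lam := by rw [← norm_hp_gt]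
  have hvY : Real.exp (-(d * t)) * ‖vp d c Y‖ = lam := by
    rw [← norm_vp_gt, heq]
  have hph : 0 < ‖hp d c X‖ := by
    nlinarith [Real.exp_pos ((c : ℝ) * t), norm_nonneg (hp d c X)]
  have hpv : 0 < ‖vp d c Y‖ := by
    nlinarith [Real.exp_pos (-((d : ℝ) * t)), norm_nonneg (vp d c Y)]
  have key : Real.exp (c * t) * ‖hp d c X‖ = Real.exp (-(d * t)) * ‖vp d c Y‖ := by
    rw [hhX, hvY]
  -- generic ball membership helper
  have hballZ : ∀ Z ∈ latSet M, Z ≠ 0 → fullNorm d c (g.mulVec Z) ≤ lam →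
      g.mulVec Z = g.mulVec X ∨ g.mulVec Z = -(g.mulVec X) ∨
        g.mulVec Z = g.mulVec Y ∨ g.mulVec Z = -(g.mulVec Y) := by
    intro Z hZ hZ0 hfn
    have hgZmem : g.mulVec Z ∈ latSet (gtMat d c t * M) := by
      rw [latSet_mul]; exact ⟨Z, hZ, rfl⟩
    exact hball (g.mulVec Z) hgZmem (gt_mulVec_ne_zero hZ0) (by rw [hlam1]; exact hfn)
  -- minimality of X
  have hminX : IsMinVec d c (latSet M) X := by
    refine ⟨hX, hX0, ?_⟩
    intro Z hZ hZ0 hZh hZv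
    have h1 : ‖hp d c (g.mulVec Z)‖ ≤ lam := by
      rw [norm_hp_gt, ← hhX]
      exact mul_le_mul_of_nonneg_left hZh (Real.exp_pos _).le
    have h2 : ‖vp d c (g.mulVec Z)‖ ≤ ‖vp d c (g.mulVec X)‖ := by
      rw [norm_vp_gt, norm_vp_gt]
      exact mul_le_mul_of_nonneg_left hZv (Real.exp_pos _).le
    have h2' : ‖vp d c (g.mulVec Z)‖ < ‖vp d c (g.mulVec Y)‖ := lt_of_le_of_lt h2 h0lt
    rcases hballZ Z hZ hZ0 (max_le h1 (le_trans h2 (le_of_lt (lt_of_lt_of_le h0lt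
        (le_of_eq (heq.trans hlamdef.symm)))))) with h' | h' | h' | h'
    · have e1 : ‖hp d c (g.mulVec Z)‖ = ‖hp d c (g.mulVec X)‖ := by rw [h']
      have e2 : ‖vp d c (g.mulVec Z)‖ = ‖vp d c (g.mulVec X)‖ := by rw [h']
      rw [norm_hp_gt, norm_hp_gt] at e1
      rw [norm_vp_gt, norm_vp_gt] at e2
      exact ⟨mul_left_cancel₀ (Real.exp_ne_zero _) e1,
        mul_left_cancel₀ (Real.exp_ne_zero _) e2⟩
    · have e1 : ‖hp d c (g.mulVec Z)‖ = ‖hp d c (g.mulVec X)‖ := by rw [h', norm_hp_neg]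
      have e2 : ‖vp d c (g.mulVec Z)‖ = ‖vp d c (g.mulVec X)‖ := by rw [h', norm_vp_neg]
      rw [norm_hp_gt, norm_hp_gt] at e1
      rw [norm_vp_gt, norm_vp_gt] at e2
      exact ⟨mul_left_cancel₀ (Real.exp_ne_zero _) e1,
        mul_left_cancel₀ (Real.exp_ne_zero _) e2⟩
    · exfalso
      have : ‖vp d c (g.mulVec Z)‖ = ‖vp d c (g.mulVec Y)‖ := by rw [h']
      exact absurd this (ne_of_lt h2')
    · exfalso
      have : ‖vp d c (g.mulVec Z)‖ = ‖vp d c (g.mulVec Y)‖ := by rw [h', norm_vp_neg]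
      exact absurd this (ne_of_lt h2')
  -- minimality of Y
  have hminY : IsMinVec d c (latSet M) Y := by
    refine ⟨hY, hY0, ?_⟩
    intro Z hZ hZ0 hZh hZv
    have h1 : ‖hp d c (g.mulVec Z)‖ < lam := by
      calc ‖hp d c (g.mulVec Z)‖ ≤ ‖hp d c (g.mulVec Y)‖ := by
            rw [norm_hp_gt, norm_hp_gt]
            exact mul_le_mul_of_nonneg_left hZh (Real.exp_pos _).le
        _ < ‖vp d c (g.mulVec Y)‖ := h1lt
        _ = lam := heq
    have h2 : ‖vp d c (g.mulVec Z)‖ ≤ ‖vp d c (g.mulVec Y)‖ := by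
      rw [norm_vp_gt, norm_vp_gt]
      exact mul_le_mul_of_nonneg_left hZv (Real.exp_pos _).le
    rcases hballZ Z hZ hZ0 (max_le (le_of_lt h1) (le_trans h2 (le_of_eq heq))) with
      h' | h' | h' | h'
    · exfalso
      have : ‖hp d c (g.mulVec Z)‖ = lam := by rw [h']
      exact absurd this (ne_of_lt h1)
    · exfalso
      have : ‖hp d c (g.mulVec Z)‖ = lam := by rw [h', norm_hp_neg]
      exact absurd this (ne_of_lt h1)
    · have e1 : ‖hp d c (g.mulVec Z)‖ = ‖hp d c (g.mulVec Y)‖ := by rw [h']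
      have e2 : ‖vp d c (g.mulVec Z)‖ = ‖vp d c (g.mulVec Y)‖ := by rw [h']
      rw [norm_hp_gt, norm_hp_gt] at e1
      rw [norm_vp_gt, norm_vp_gt] at e2
      exact ⟨mul_left_cancel₀ (Real.exp_ne_zero _) e1,
        mul_left_cancel₀ (Real.exp_ne_zero _) e2⟩
    · have e1 : ‖hp d c (g.mulVec Z)‖ = ‖hp d c (g.mulVec Y)‖ := by rw [h', norm_hp_neg]
      have e2 : ‖vp d c (g.mulVec Z)‖ = ‖vp d c (g.mulVec Y)‖ := by rw [h', norm_vp_neg]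
      rw [norm_hp_gt, norm_hp_gt] at e1
      rw [norm_vp_gt, norm_vp_gt] at e2
      exact ⟨mul_left_cancel₀ (Real.exp_ne_zero _) e1,
        mul_left_cancel₀ (Real.exp_ne_zero _) e2⟩
  -- heights comparison
  have hXYlt : ‖vp d c X‖ < ‖vp d c Y‖ := by
    have := h0lt
    rw [norm_vp_gt, norm_vp_gt] at this
    exact lt_of_mul_lt_mul_left this (Real.exp_pos _).le
  -- consecutiveness
  refine ⟨X, Y, ⟨hminX, hminY, hXYlt, ?_⟩, t_formula hd hph hpv key⟩
  intro Z hZmin hgt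
  by_contra hlt
  push_neg at hlt
  obtain ⟨hZmem, hZ0, hZmin'⟩ := hZmin
  have hZh : ‖hp d c Z‖ < ‖hp d c X‖ := by
    by_contra hge
    push_neg at hge
    obtain ⟨-, h2⟩ := hZmin' X hX hX0 hge (le_of_lt hgt)
    exact absurd h2 (ne_of_lt hgt)
  have h1 : ‖hp d c (g.mulVec Z)‖ < lam := by
    rw [norm_hp_gt, ← hhX]
    exact mul_lt_mul_of_pos_left hZh (Real.exp_pos _)
  have h2 : ‖vp d c (g.mulVec Z)‖ < ‖vp d c (g.mulVec Y)‖ := by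
    rw [norm_vp_gt, norm_vp_gt]
    exact mul_lt_mul_of_pos_left hlt (Real.exp_pos _)
  have h2' : ‖vp d c (g.mulVec Z)‖ < lam := by rw [← heq]; exact h2
  rcases hballZ Z hZmem hZ0 (max_le (le_of_lt h1) (le_of_lt h2')) with h' | h' | h' | h'
  · exact absurd (by rw [h'] : ‖hp d c (g.mulVec Z)‖ = lam) (ne_of_lt h1)
  · exact absurd (by rw [h', norm_hp_neg] : ‖hp d c (g.mulVec Z)‖ = lam) (ne_of_lt h1)
  · exact absurd (by rw [h', heq] : ‖vp d c (g.mulVec Z)‖ = lam) (ne_of_lt h2')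
  · exact absurd (by rw [h', norm_vp_neg, heq] : ‖vp d c (g.mulVec Z)‖ = lam)
      (ne_of_lt h2')

end Aux6
section Aux7

variable {d c : ℕ}

lemma nz_norms {Λ : Set (Fin (d + c) → ℝ)} (hN : ¬ NPred d c Λ)
    {v : Fin (d + c) → ℝ} (hv : v ∈ Λ) (hv0 : v ≠ 0) :
    0 < ‖hp d c v‖ ∧ 0 < ‖vp d c v‖ := by
  constructor
  · rw [norm_pos_iff]
    intro h
    exact hN (Or.inr ⟨v, hv, hv0, Or.inl h⟩)
  · rw [norm_pos_iff]
    intro h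
    exact hN (Or.inr ⟨v, hv, hv0, Or.inr h⟩)

lemma eq_or_neg_of_norm_eq {Λ : Set (Fin (d + c) → ℝ)} (hN : ¬ NPred d c Λ)
    {v₁ v₂ : Fin (d + c) → ℝ} (h₁ : v₁ ∈ Λ) (h₂ : v₂ ∈ Λ) (h10 : v₁ ≠ 0) (h20 : v₂ ≠ 0)
    (h : ‖hp d c v₁‖ = ‖hp d c v₂‖ ∨ ‖vp d c v₁‖ = ‖vp d c v₂‖) :
    v₁ = v₂ ∨ v₁ = -v₂ := by
  by_contra hcon
  push_neg at hcon
  apply hN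
  left
  refine ⟨v₁, h₁, v₂, h₂, h10, h20, hcon.1, hcon.2, ?_⟩
  rcases h with h | h
  · exact Or.inl ⟨h, (nz_norms hN h₁ h10).1⟩
  · exact Or.inr ⟨h, (nz_norms hN h₁ h10).2⟩

lemma t_formula_rev (hd : 0 < d) {t ph pv : ℝ} (hph : 0 < ph) (hpv : 0 < pv)
    (ht : t = (1 / ((d : ℝ) + c)) * Real.log (pv / ph)) :
    Real.exp (c * t) * ph = Real.exp (-(d * t)) * pv := by
  have hne : ((d : ℝ) + c) ≠ 0 := ne_of_gt (dc_pos hd)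
  have h1 : ((d : ℝ) + c) * t = Real.log (pv / ph) := by
    rw [ht]; field_simp
  have h2 : pv = Real.exp (((d : ℝ) + c) * t) * ph := by
    have := Real.exp_log (div_pos hpv hph)
    rw [← h1] at this
    field_simp at this ⊢
    linarith [this]
  rw [h2, ← mul_assoc, ← Real.exp_add]
  congr 2
  ring

end Aux7
section Aux8

variable {d c : ℕ}

lemma backward_S' (M : Matrix (Fin (d + c)) (Fin (d + c)) ℝ)
    (hN : ¬ NPred d c (latSet M)) {X : Fin (d + c) → ℝ}
    (hX : IsMinVec d c (latSet M) X) {t : ℝ}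
    (key : Real.exp (c * t) * ‖hp d c X‖ = Real.exp (-(d * t)) * ‖vp d c X‖) :
    S'Pred d c (latSet (gtMat d c t * M)) := by
  obtain ⟨hXmem, hX0, hXmin⟩ := hX
  obtain ⟨hphX, hpvX⟩ := nz_norms hN hXmem hX0
  set g := gtMat d c t with hg
  set lam := Real.exp (c * t) * ‖hp d c X‖ with hlamdef
  have hlampos : 0 < lam := mul_pos (Real.exp_pos _) hphX
  have hw_h : ‖hp d c (g.mulVec X)‖ = lam := by rw [norm_hp_gt]
  have hw_v : ‖vp d c (g.mulVec X)‖ = lam := by rw [norm_vp_gt]; exact key.symm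
  have hfnw : fullNorm d c (g.mulVec X) = lam := by
    rw [fullNorm, hw_h, hw_v, max_self]
  have hwmem : g.mulVec X ∈ latSet (gtMat d c t * M) := by
    rw [latSet_mul]; exact ⟨X, hXmem, rfl⟩
  have hw0 : g.mulVec X ≠ 0 := gt_mulVec_ne_zero hX0
  -- every other nonzero element has fullNorm > lam
  have hkey : ∀ z ∈ latSet (gtMat d c t * M), z ≠ 0 → fullNorm d c z ≤ lam →
      z = g.mulVec X ∨ z = -(g.mulVec X) := by
    intro z hz hz0 hfn
    rw [latSet_mul] at hz
    obtain ⟨Z, hZmem, rfl⟩ := hz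
    have hZ0 : Z ≠ 0 := by
      intro h0; exact hz0 (by rw [h0, Matrix.mulVec_zero])
    have h1 : ‖hp d c Z‖ ≤ ‖hp d c X‖ := by
      have := le_trans (le_max_left _ _) hfn
      rw [norm_hp_gt, hlamdef] at this
      exact le_of_mul_le_mul_left this (Real.exp_pos _)
    have h2 : ‖vp d c Z‖ ≤ ‖vp d c X‖ := by
      have := le_trans (le_max_right _ _) hfn
      rw [norm_vp_gt, key] at this
      exact le_of_mul_le_mul_left this (Real.exp_pos _)
    obtain ⟨e1, _⟩ := hXmin Z hZmem hZ0 h1 h2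
    rcases eq_or_neg_of_norm_eq hN hZmem hXmem hZ0 hX0 (Or.inl e1) with h' | h'
    · left; rw [h']
    · right; rw [h', Matrix.mulVec_neg]
  have hlb : ∀ y ∈ latSet (gtMat d c t * M), y ≠ 0 → lam ≤ fullNorm d c y := by
    intro y hy hy0
    by_contra hlt
    push_neg at hlt
    rcases hkey y hy hy0 (le_of_lt hlt) with h' | h'
    · rw [h', hfnw] at hlt; exact lt_irrefl _ hlt
    · rw [h', fullNorm_neg, hfnw] at hlt; exact lt_irrefl _ hlt
  have hlam1 : lambda1 d c (latSet (gtMat d c t * M)) = lam := by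
    refine le_antisymm ?_ ?_
    · refine csInf_le ⟨0, ?_⟩ ⟨g.mulVec X, ⟨hwmem, hw0⟩, hfnw⟩
      rintro r ⟨y, _, rfl⟩
      exact fullNorm_nonneg y
    · refine le_csInf ⟨fullNorm d c (g.mulVec X), ⟨g.mulVec X, ⟨hwmem, hw0⟩, rfl⟩⟩ ?_
      rintro r ⟨y, ⟨hy, hy0⟩, rfl⟩
      exact hlb y hy hy0
  refine ⟨g.mulVec X, hwmem, hw0, ?_, ?_⟩
  · intro x hx hx0 hfn
    rw [hlam1] at hfn
    exact hkey x hx hx0 hfn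
  · rw [hlam1]
    ext x
    simp only [Set.mem_setOf_eq, fullNorm, max_le_iff, hw_h, hw_v]

end Aux8
section Aux9

variable {d c : ℕ}

lemma backward_S (M : Matrix (Fin (d + c)) (Fin (d + c)) ℝ) (hM : M.det = 1)
    (hN : ¬ NPred d c (latSet M)) {X Y : Fin (d + c) → ℝ}
    (hXY : ConsecMin d c (latSet M) X Y) {t : ℝ}
    (key : Real.exp (c * t) * ‖hp d c X‖ = Real.exp (-(d * t)) * ‖vp d c Y‖) :
    SPred d c (latSet (gtMat d c t * M)) := by
  obtain ⟨⟨hXmem, hX0, hXmin⟩, ⟨hYmem, hY0, hYmin⟩, hlt, hcons⟩ := hXY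
  have hdetM : IsUnit M.det := by rw [hM]; exact isUnit_one
  obtain ⟨hphX, hpvX⟩ := nz_norms hN hXmem hX0
  obtain ⟨hphY, hpvY⟩ := nz_norms hN hYmem hY0
  have hYX : ‖hp d c Y‖ < ‖hp d c X‖ := by
    by_contra hge
    push_neg at hge
    obtain ⟨-, h2⟩ := hYmin X hXmem hX0 hge (le_of_lt hlt)
    exact absurd h2 (ne_of_lt hlt)
  set g := gtMat d c t with hg
  set lam := Real.exp (c * t) * ‖hp d c X‖ with hlamdef
  have hlampos : 0 < lam := mul_pos (Real.exp_pos _) hphX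
  have h0h : ‖hp d c (g.mulVec X)‖ = lam := by rw [norm_hp_gt]
  have h1v : ‖vp d c (g.mulVec Y)‖ = lam := by rw [norm_vp_gt]; exact key.symm
  have h1h : ‖hp d c (g.mulVec Y)‖ < lam := by
    rw [norm_hp_gt, hlamdef]
    exact mul_lt_mul_of_pos_left hYX (Real.exp_pos _)
  have h0v : ‖vp d c (g.mulVec X)‖ < lam := by
    rw [norm_vp_gt, key]
    exact mul_lt_mul_of_pos_left hlt (Real.exp_pos _)
  have h0mem : g.mulVec X ∈ latSet (gtMat d c t * M) := by
    rw [latSet_mul]; exact ⟨X, hXmem, rfl⟩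
  have h1mem : g.mulVec Y ∈ latSet (gtMat d c t * M) := by
    rw [latSet_mul]; exact ⟨Y, hYmem, rfl⟩
  have h00 : g.mulVec X ≠ 0 := gt_mulVec_ne_zero hX0
  have h10 : g.mulVec Y ≠ 0 := gt_mulVec_ne_zero hY0
  -- linear independence
  have hli : LinearIndependent ℝ ![g.mulVec X, g.mulVec Y] := by
    rw [linearIndependent_fin2]
    constructor
    · simpa using h10
    · intro a ha
      simp only [Matrix.cons_val_one, Matrix.head_cons, Matrix.cons_val_zero] at ha
      have e1 : ‖hp d c (g.mulVec X)‖ = |a| * ‖hp d c (g.mulVec Y)‖ := by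
        rw [← ha, hp_smul, norm_smul, Real.norm_eq_abs]
      have e2 : ‖vp d c (g.mulVec X)‖ = |a| * ‖vp d c (g.mulVec Y)‖ := by
        rw [← ha, vp_smul, norm_smul, Real.norm_eq_abs]
      rw [h1v] at e2
      rw [e2] at h0v
      have ha1 : |a| < 1 := (mul_lt_iff_lt_one_left hlampos).mp h0v
      rw [h0h] at e1
      have t1 : |a| * ‖hp d c (g.mulVec Y)‖ ≤ |a| * lam :=
        mul_le_mul_of_nonneg_left (le_of_lt h1h) (abs_nonneg a)
      have t2 : |a| * lam < 1 * lam := mul_lt_mul_of_pos_right ha1 hlampos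
      rw [one_mul] at t2
      linarith
  -- gap property in the original lattice
  have hgap : ∀ Z ∈ latSet M, Z ≠ 0 → ‖hp d c Z‖ ≤ ‖hp d c X‖ → ‖vp d c Z‖ ≤ ‖vp d c Y‖ →
      Z = X ∨ Z = -X ∨ Z = Y ∨ Z = -Y := by
    intro Z hZ hZ0 hZh hZv
    by_cases hiX : Z = X ∨ Z = -X
    · rcases hiX with h' | h'
      · exact Or.inl h'
      · exact Or.inr (Or.inl h')
    by_cases hiY : Z = Y ∨ Z = -Y
    · rcases hiY with h' | h'
      · exact Or.inr (Or.inr (Or.inl h'))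
      · exact Or.inr (Or.inr (Or.inr h'))
    exfalso
    push_neg at hiX hiY
    have hZhlt : ‖hp d c Z‖ < ‖hp d c X‖ := by
      rcases hZh.lt_or_eq with h' | h'
      · exact h'
      · exfalso
        rcases eq_or_neg_of_norm_eq hN hZ hXmem hZ0 hX0 (Or.inl h') with h'' | h''
        · exact hiX.1 h''
        · exact hiX.2 h''
    have hZvlt : ‖vp d c Z‖ < ‖vp d c Y‖ := by
      rcases hZv.lt_or_eq with h' | h'
      · exact h'
      · exfalso
        rcases eq_or_neg_of_norm_eq hN hZ hYmem hZ0 hY0 (Or.inr h') with h'' | h''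
        · exact hiY.1 h''
        · exact hiY.2 h''
    obtain ⟨W, hWmin, hWh, hWv⟩ := exists_minvec_le M hdetM hZ hZ0
    rcases le_or_gt ‖vp d c W‖ ‖vp d c X‖ with hc1 | hc2
    · obtain ⟨e1, -⟩ := hXmin W hWmin.1 hWmin.2.1 (le_trans hWh (le_of_lt hZhlt)) hc1
      linarith [lt_of_le_of_lt hWh hZhlt]
    · have := hcons W hWmin hc2
      linarith [lt_of_le_of_lt hWv hZvlt]
  -- ball property in the flowed lattice
  have hkey : ∀ z ∈ latSet (gtMat d c t * M), z ≠ 0 → fullNorm d c z ≤ lam →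
      z = g.mulVec X ∨ z = -(g.mulVec X) ∨ z = g.mulVec Y ∨ z = -(g.mulVec Y) := by
    intro z hz hz0 hfn
    rw [latSet_mul] at hz
    obtain ⟨Z, hZmem, rfl⟩ := hz
    have hZ0 : Z ≠ 0 := by
      intro h0; exact hz0 (by rw [h0, Matrix.mulVec_zero])
    have hh : ‖hp d c Z‖ ≤ ‖hp d c X‖ := by
      have := le_trans (le_max_left _ _) hfn
      rw [norm_hp_gt, hlamdef] at this
      exact le_of_mul_le_mul_left this (Real.exp_pos _)
    have hv : ‖vp d c Z‖ ≤ ‖vp d c Y‖ := by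
      have := le_trans (le_max_right _ _) hfn
      rw [norm_vp_gt, key] at this
      exact le_of_mul_le_mul_left this (Real.exp_pos _)
    rcases hgap Z hZmem hZ0 hh hv with h' | h' | h' | h'
    · exact Or.inl (by rw [h'])
    · exact Or.inr (Or.inl (by rw [h', Matrix.mulVec_neg]))
    · exact Or.inr (Or.inr (Or.inl (by rw [h'])))
    · exact Or.inr (Or.inr (Or.inr (by rw [h', Matrix.mulVec_neg])))
  have hfn0 : fullNorm d c (g.mulVec X) = lam := by
    rw [fullNorm, h0h, max_eq_left (le_of_lt h0v)]
  have hfn1 : fullNorm d c (g.mulVec Y) = lam := by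
    rw [fullNorm, h1v, max_eq_right (le_of_lt h1h)]
  have hlb : ∀ y ∈ latSet (gtMat d c t * M), y ≠ 0 → lam ≤ fullNorm d c y := by
    intro y hy hy0
    by_contra hltc
    push_neg at hltc
    rcases hkey y hy hy0 (le_of_lt hltc) with h' | h' | h' | h'
    · rw [h', hfn0] at hltc; exact lt_irrefl _ hltc
    · rw [h', fullNorm_neg, hfn0] at hltc; exact lt_irrefl _ hltc
    · rw [h', hfn1] at hltc; exact lt_irrefl _ hltc
    · rw [h', fullNorm_neg, hfn1] at hltc; exact lt_irrefl _ hltc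
  have hlam1 : lambda1 d c (latSet (gtMat d c t * M)) = lam := by
    refine le_antisymm ?_ ?_
    · refine csInf_le ⟨0, ?_⟩ ⟨g.mulVec X, ⟨h0mem, h00⟩, hfn0⟩
      rintro r ⟨y, _, rfl⟩
      exact fullNorm_nonneg y
    · refine le_csInf ⟨fullNorm d c (g.mulVec X), ⟨g.mulVec X, ⟨h0mem, h00⟩, rfl⟩⟩ ?_
      rintro r ⟨y, ⟨hy, hy0⟩, rfl⟩
      exact hlb y hy hy0
  refine ⟨g.mulVec X, g.mulVec Y, h0mem, h1mem, hli, ?_, ?_, ?_, ?_⟩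
  · rw [h1v]; exact h1h
  · rw [h1v]; exact h0v
  · rw [h1v, h0h]
  · intro x hx hx0 hfn
    rw [hlam1] at hfn
    exact hkey x hx hx0 hfn

end Aux9
/-- **Visiting times of the transversals `S` and `S'`.** For a unimodular lattice
`Λ = M·ℤ^{d+c}`: (1) the set of times `t` with `g_tΛ ∈ S` is contained in
`V_Λ(S) = {(1/(d+c))·ln(q_{k+1}/r_k)}` (ranging over consecutive minimal vectors), and the
set of times with `g_tΛ ∈ S'` is contained in `V_Λ(S') = {(1/(d+c))·ln(q_k/r_k)}` (ranging
over minimal vectors); (2) if `Λ ∉ 𝒩`, both inclusions are equalities. -/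
theorem visiting_times_subset_and_eq (d c : ℕ) (hd : 0 < d) (hc : 0 < c)
    (M : Matrix (Fin (d + c)) (Fin (d + c)) ℝ) (hM : M.det = 1) :
    ({t : ℝ | SPred d c (latSet (gtMat d c t * M))} ⊆
        {r : ℝ | ∃ X Y : Fin (d + c) → ℝ, ConsecMin d c (latSet M) X Y ∧
          r = (1 / (d + c : ℝ)) * Real.log (‖vp d c Y‖ / ‖hp d c X‖)} ∧
      {t : ℝ | S'Pred d c (latSet (gtMat d c t * M))} ⊆
        {r : ℝ | ∃ X : Fin (d + c) → ℝ, IsMinVec d c (latSet M) X ∧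
          r = (1 / (d + c : ℝ)) * Real.log (‖vp d c X‖ / ‖hp d c X‖)}) ∧
    (¬ NPred d c (latSet M) →
      ({t : ℝ | SPred d c (latSet (gtMat d c t * M))} =
        {r : ℝ | ∃ X Y : Fin (d + c) → ℝ, ConsecMin d c (latSet M) X Y ∧
          r = (1 / (d + c : ℝ)) * Real.log (‖vp d c Y‖ / ‖hp d c X‖)} ∧
      {t : ℝ | S'Pred d c (latSet (gtMat d c t * M))} =
        {r : ℝ | ∃ X : Fin (d + c) → ℝ, IsMinVec d c (latSet M) X ∧
          r = (1 / (d + c : ℝ)) * Real.log (‖vp d c X‖ / ‖hp d c X‖)})) := by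
  have hsub1 : {t : ℝ | SPred d c (latSet (gtMat d c t * M))} ⊆
      {r : ℝ | ∃ X Y : Fin (d + c) → ℝ, ConsecMin d c (latSet M) X Y ∧
        r = (1 / (d + c : ℝ)) * Real.log (‖vp d c Y‖ / ‖hp d c X‖)} := by
    intro t ht
    exact forward_S hd hc M hM ht
  have hsub2 : {t : ℝ | S'Pred d c (latSet (gtMat d c t * M))} ⊆
      {r : ℝ | ∃ X : Fin (d + c) → ℝ, IsMinVec d c (latSet M) X ∧
        r = (1 / (d + c : ℝ)) * Real.log (‖vp d c X‖ / ‖hp d c X‖)} := by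
    intro t ht
    exact forward_S' hd hc M ht
  refine ⟨⟨hsub1, hsub2⟩, ?_⟩
  intro hN
  constructor
  · refine Set.Subset.antisymm hsub1 ?_
    rintro r ⟨X, Y, hXY, hr⟩
    have hphX : 0 < ‖hp d c X‖ := (nz_norms hN hXY.1.1 hXY.1.2.1).1
    have hpvY : 0 < ‖vp d c Y‖ := (nz_norms hN hXY.2.1.1 hXY.2.1.2.1).2
    exact backward_S M hM hN hXY (t_formula_rev hd hphX hpvY hr)
  · refine Set.Subset.antisymm hsub2 ?_
    rintro r ⟨X, hX, hr⟩
    have hphX : 0 < ‖hp d c X‖ := (nz_norms hN hX.1 hX.2.1).1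
    have hpvX : 0 < ‖vp d c X‖ := (nz_norms hN hX.1 hX.2.1).2
    exact backward_S' M hN hX (t_formula_rev hd hphX hpvX hr)
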